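/- arXiv:2204.08646 — 3 statements merged into one kernel-verified Lean document; each statement's English description precedes it below -/
import Mathlib

section
/- Let à ∈ ℝ^{n×n} be a row-stochastic matrix (nonnegative entries, each row summing to 1), let U′ be a diagonal n×n matrix with positive diagonal entries, set U_β = (I + U′)^{-1} and L̃ = I − Ã, and let Y′ ∈ ℝ^{n×c} be fixed. Then the matrix U′ + L̃ is invertible, and for any initial matrix F^{(0)} ∈ ℝ^{n×c}, the sequence defined by the iteration F^{(t)} = U_β Ã F^{(t-1)} + (I − U_β) Y′ converges, as t → ∞, to F* = (U′ + L̃)^{-1} U′ Y′. -/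
open Matrix Filter Topology BigOperators

attribute [local instance] Matrix.linftyOpNormedRing Matrix.linftyOpNormedAlgebra

lemma entry_le_linfty {n : ℕ} (M : Matrix (Fin n) (Fin n) ℝ) (i k : Fin n) :
    ‖M i k‖ ≤ ‖M‖ := by
  have h1 : ‖M i k‖₊ ≤ ∑ j, ‖M i j‖₊ :=
    Finset.single_le_sum (f := fun j => ‖M i j‖₊) (fun j _ => zero_le) (Finset.mem_univ k)
  have h2 : (∑ j, ‖M i j‖₊) ≤ ‖M‖₊ := by
    rw [Matrix.linfty_opNNNorm_def]
    exact Finset.le_sup (f := fun i => ∑ j, ‖M i j‖₊) (Finset.mem_univ i)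
  exact_mod_cast h1.trans h2

/-- Proposition 1: for a row-stochastic `Atil`, a positive diagonal `U′`,
`U_β = (I + U′)⁻¹` and `L̃ = I − Atil`, the matrix `U′ + L̃` is invertible and the
iteration `F^{(t)} = U_β Atil F^{(t−1)} + (I − U_β) Y′` converges (entrywise) to
`F* = (U′ + L̃)⁻¹ U′ Y′`. -/
theorem stmt_2 (n c : ℕ)
    (Atil : Matrix (Fin n) (Fin n) ℝ)
    (hA_nonneg : ∀ i j, 0 ≤ Atil i j) (hA_rows : ∀ i, ∑ j, Atil i j = 1)
    (u' : Fin n → ℝ) (hu' : ∀ i, 0 < u' i)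
    (Y' : Matrix (Fin n) (Fin c) ℝ)
    (F : ℕ → Matrix (Fin n) (Fin c) ℝ)
    (hF : ∀ t : ℕ,
      F (t + 1) = (1 + Matrix.diagonal u')⁻¹ * Atil * F t
        + (1 - (1 + Matrix.diagonal u')⁻¹) * Y') :
    IsUnit (Matrix.diagonal u' + (1 - Atil)) ∧
      ∀ i j, Tendsto (fun t => F t i j) atTop
        (𝓝 (((Matrix.diagonal u' + (1 - Atil))⁻¹ * Matrix.diagonal u' * Y') i j)) := by
  classical
  have hcomp : CompleteSpace (Matrix (Fin n) (Fin n) ℝ) := FiniteDimensional.complete ℝ _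
  set D : Matrix (Fin n) (Fin n) ℝ := Matrix.diagonal u' with hD
  have hpos : ∀ i, 0 < 1 + u' i := fun i => by linarith [hu' i]
  have h1D : (1 : Matrix (Fin n) (Fin n) ℝ) + D = Matrix.diagonal (fun i => 1 + u' i) := by
    rw [hD, ← Matrix.diagonal_one, Matrix.diagonal_add]
  have hinv : (1 + D)⁻¹ = Matrix.diagonal (fun i => (1 + u' i)⁻¹) := by
    apply Matrix.inv_eq_right_inv
    rw [h1D, Matrix.diagonal_mul_diagonal, ← Matrix.diagonal_one]
    have : (fun i => (1 + u' i) * (1 + u' i)⁻¹) = fun _ : Fin n => (1 : ℝ) :=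
      funext fun i => mul_inv_cancel₀ (hpos i).ne'
    rw [this]
  set B : Matrix (Fin n) (Fin n) ℝ := (1 + D)⁻¹ * Atil with hB
  have hBentry : ∀ i j, B i j = (1 + u' i)⁻¹ * Atil i j := by
    intro i j
    rw [hB, hinv, Matrix.diagonal_mul]
  -- norm of B < 1
  have hBnorm : ‖B‖ < 1 := by
    rw [Matrix.linfty_opNorm_def]
    have h : (Finset.univ.sup fun i => ∑ j, ‖B i j‖₊) < 1 := by
      rw [Finset.sup_lt_iff (by norm_num : (⊥ : NNReal) < 1)]
      intro i _
      have hcoe : ((∑ j, ‖B i j‖₊ : NNReal) : ℝ) = (1 + u' i)⁻¹ := by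
        push_cast
        have : ∀ j, ‖B i j‖ = (1 + u' i)⁻¹ * Atil i j := by
          intro j
          rw [hBentry]
          exact abs_of_nonneg (mul_nonneg (inv_nonneg.2 (hpos i).le) (hA_nonneg i j))
        simp_rw [this, ← Finset.mul_sum, hA_rows i, mul_one]
      have hlt : ((∑ j, ‖B i j‖₊ : NNReal) : ℝ) < 1 := by
        rw [hcoe]
        rw [inv_lt_one_iff₀]
        right; linarith [hu' i]
      exact_mod_cast hlt
    exact_mod_cast h
  -- invertibility
  have hdet1D : IsUnit (1 + D).det := by
    rw [h1D, Matrix.det_diagonal]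
    exact (Finset.prod_pos (fun i _ => hpos i)).ne'.isUnit
  have hunit1B : IsUnit (1 - B) := (Units.oneSub B hBnorm).isUnit
  have hfact : D + (1 - Atil) = (1 + D) * (1 - B) := by
    rw [mul_sub, mul_one, hB, ← mul_assoc, Matrix.mul_nonsing_inv _ hdet1D, one_mul]
    abel
  have hunit : IsUnit (D + (1 - Atil)) := by
    rw [hfact]
    exact ((Matrix.isUnit_iff_isUnit_det _).2 hdet1D).mul hunit1B
  refine ⟨hunit, ?_⟩
  -- fixed point
  set Fs : Matrix (Fin n) (Fin c) ℝ := (D + (1 - Atil))⁻¹ * D * Y' with hFs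
  set E0 : Matrix (Fin n) (Fin c) ℝ := F 0 - Fs with hE0
  have hinvfact : (D + (1 - Atil))⁻¹ = (1 - B)⁻¹ * (1 + D)⁻¹ := by
    rw [hfact, Matrix.mul_inv_rev]
  have hCdiag : (1 : Matrix (Fin n) (Fin n) ℝ) - (1 + D)⁻¹ = (1 + D)⁻¹ * D := by
    rw [hinv, hD, Matrix.diagonal_mul_diagonal, ← Matrix.diagonal_one, Matrix.diagonal_sub]
    have : (fun i => (1 : ℝ) - (1 + u' i)⁻¹) = fun i => (1 + u' i)⁻¹ * u' i := by
      funext i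
      have h := (hpos i).ne'
      field_simp
      ring
    rw [this]
  have hdet1B : IsUnit (1 - B).det := (Matrix.isUnit_iff_isUnit_det _).1 hunit1B
  have hfix : Fs = B * Fs + (1 - (1 + D)⁻¹) * Y' := by
    have h1 : (1 - B) * Fs = (1 + D)⁻¹ * D * Y' := by
      rw [hFs, hinvfact]
      simp only [Matrix.mul_assoc]
      rw [Matrix.mul_nonsing_inv_cancel_left _ _ hdet1B]
    have h2 : (1 - (1 + D)⁻¹) * Y' = (1 + D)⁻¹ * D * Y' := by
      rw [hCdiag]
    rw [h2, ← h1, Matrix.sub_mul, Matrix.one_mul]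
    abel
  -- closed form for F t
  have hclosed : ∀ t, F t = Fs + B ^ t * E0 := by
    intro t
    induction t with
    | zero =>
      rw [pow_zero, Matrix.one_mul, hE0]
      abel
    | succ t ih =>
      rw [hF t, ih, Matrix.mul_add]
      conv_rhs => rw [hfix, pow_succ', Matrix.mul_assoc B (B ^ t) E0]
      abel
  -- convergence
  intro i j
  have hpow : Tendsto (fun t => ‖B ^ t‖) atTop (𝓝 0) := by
    have := (tendsto_pow_atTop_nhds_zero_of_norm_lt_one hBnorm).norm
    simpa using this
  have hentry0 : ∀ k, Tendsto (fun t => (B ^ t) i k) atTop (𝓝 0) := by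
    intro k
    exact squeeze_zero_norm (fun t => entry_le_linfty (B ^ t) i k) hpow
  have hsum : Tendsto (fun t => ∑ k, (B ^ t) i k * E0 k j) atTop (𝓝 0) := by
    have h0 : Tendsto (fun t => ∑ k, (B ^ t) i k * E0 k j) atTop (𝓝 (∑ k : Fin n, 0)) :=
      tendsto_finset_sum _ (fun k _ => by simpa using (hentry0 k).mul_const (E0 k j))
    simpa using h0
  have hlim : Tendsto (fun t => Fs i j + ∑ k, (B ^ t) i k * E0 k j) atTop (𝓝 (Fs i j + 0)) :=
    tendsto_const_nhds.add hsum
  rw [add_zero] at hlim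
  have heq : ∀ t, F t i j = Fs i j + ∑ k, (B ^ t) i k * E0 k j := by
    intro t
    rw [hclosed t]
    simp [Matrix.add_apply, Matrix.mul_apply]
  simpa [← heq] using hlim
end

section
/- Let à ∈ ℝ^{n×n} be a row-stochastic matrix (nonnegative entries, each row summing to 1), let U′ be a diagonal n×n matrix with positive diagonal entries, and set U_β = (I + U′)^{-1} and L̃ = I − Ã. Then the following matrix identity holds: (I − U_β Ã)^{-1} (I − U_β) = (U′ + L̃)^{-1} U′. -/
open Matrix BigOperators

/-- The matrix identity `(I − U_β Atil)⁻¹ (I − U_β) = (U′ + L̃)⁻¹ U′`, where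
`U_β = (I + U′)⁻¹` and `L̃ = I − Atil`, for a row-stochastic `Atil` and a
positive diagonal `U′`. -/
theorem stmt_5 (n : ℕ)
    (Atil : Matrix (Fin n) (Fin n) ℝ)
    (hA_nonneg : ∀ i j, 0 ≤ Atil i j) (hA_rows : ∀ i, ∑ j, Atil i j = 1)
    (u' : Fin n → ℝ) (hu' : ∀ i, 0 < u' i) :
    (1 - (1 + Matrix.diagonal u')⁻¹ * Atil)⁻¹ * (1 - (1 + Matrix.diagonal u')⁻¹)
      = (Matrix.diagonal u' + (1 - Atil))⁻¹ * Matrix.diagonal u' := by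
  set D : Matrix (Fin n) (Fin n) ℝ := 1 + Matrix.diagonal u' with hDdef
  set M : Matrix (Fin n) (Fin n) ℝ := Matrix.diagonal u' + (1 - Atil) with hMdef
  have hDdiag : D = Matrix.diagonal (fun i => 1 + u' i) := by
    rw [hDdef, ← Matrix.diagonal_one, Matrix.diagonal_add]
  have hD : IsUnit D.det := by
    rw [hDdiag, Matrix.det_diagonal]
    exact (Finset.prod_pos fun i _ => by linarith [hu' i]).ne'.isUnit
  -- diagonal dominance of M
  have hAle : ∀ i, Atil i i ≤ 1 := fun i => by
    rw [← hA_rows i]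
    exact Finset.single_le_sum (fun j _ => hA_nonneg i j) (Finset.mem_univ i)
  have hM : IsUnit M.det := by
    refine (det_ne_zero_of_sum_row_lt_diag (A := M) fun k => ?_).isUnit
    have h1 : ∀ j ∈ Finset.univ.erase k, ‖M k j‖ = Atil k j := by
      intro j hj
      have hjk : j ≠ k := Finset.ne_of_mem_erase hj
      rw [hMdef]
      simp only [Matrix.add_apply, Matrix.sub_apply, Matrix.diagonal_apply_ne _ hjk.symm,
        Matrix.one_apply_ne' hjk, Real.norm_eq_abs]
      rw [zero_add, zero_sub, abs_neg, abs_of_nonneg (hA_nonneg k j)]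
    rw [Finset.sum_congr rfl h1]
    have h2 : ∑ j ∈ Finset.univ.erase k, Atil k j = 1 - Atil k k := by
      have := Finset.add_sum_erase Finset.univ (Atil k) (Finset.mem_univ k)
      rw [hA_rows k] at this
      linarith
    have hMkk : M k k = u' k + (1 - Atil k k) := by
      simp [hMdef, Matrix.add_apply, Matrix.sub_apply, Matrix.diagonal_apply_eq,
        Matrix.one_apply_eq]
    rw [h2, hMkk, Real.norm_eq_abs, abs_of_pos (by nlinarith [hu' k, hAle k])]
    nlinarith [hu' k]
  have hDM : 1 - D⁻¹ * Atil = D⁻¹ * M := by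
    have : D⁻¹ * M = D⁻¹ * D - D⁻¹ * Atil := by
      rw [hMdef, hDdef]; noncomm_ring
    rw [this, Matrix.nonsing_inv_mul _ hD]
  have hDI : 1 - D⁻¹ = D⁻¹ * Matrix.diagonal u' := by
    have : D⁻¹ * Matrix.diagonal u' = D⁻¹ * D - D⁻¹ * 1 := by
      rw [hDdef]; noncomm_ring
    rw [this, Matrix.nonsing_inv_mul _ hD, Matrix.mul_one]
  rw [hDM, hDI, Matrix.mul_inv_rev, Matrix.nonsing_inv_nonsing_inv _ hD,
    Matrix.mul_assoc, ← Matrix.mul_assoc D, Matrix.mul_nonsing_inv _ hD,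
    Matrix.one_mul]
end

section
/- Let à ∈ ℝ^{n×n} satisfy xᵀ(I − Ã)x ≥ 0 for all x ∈ ℝ^n, set L̃ = I − Ã, let U and U_α be diagonal n×n matrices with nonnegative diagonal entries, let F_init ∈ ℝ^{n×c} be row-stochastic, and define J(F, B) = tr(Fᵀ L̃ F) + tr((F−F_init)ᵀ U (F−F_init)) + tr((F−B)ᵀ U_α (F−B)). Suppose F_r, F_{r+1} ∈ ℝ^{n×c} and B₁, B₂, B₃ ∈ ℝ^{n×c} are row-stochastic matrices such that (i) tr((F_r−B₁)ᵀ U_α (F_r−B₁)) ≥ tr((F_r−B₂)ᵀ U_α (F_r−B₂)) (the classifier update does not increase the third term) and (ii) J(F_r, B₂) ≥ J(F_{r+1}, B₂) (the label-embedding update does not increase the objective with predictions frozen). Then J(F_{r+1}, B₃) ≤ J(F_r, B₁) + 2 tr(U_α); that is, one alternate round of the algorithm decreases the value of the objective to within the constant difference 2 tr(U_α). -/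
open Matrix BigOperators

lemma tr_quad_eq {n c : ℕ} (d : Fin n → ℝ) (M : Matrix (Fin n) (Fin c) ℝ) :
    Matrix.trace (Mᵀ * Matrix.diagonal d * M) = ∑ i, d i * ∑ j, (M i j)^2 := by
  rw [Matrix.mul_assoc, Matrix.trace]
  simp only [Matrix.diag_apply, Matrix.mul_apply, Matrix.transpose_apply,
    Matrix.diagonal_mul]
  rw [Finset.sum_comm]
  refine Finset.sum_congr rfl fun i _ => ?_
  rw [Finset.mul_sum]
  refine Finset.sum_congr rfl fun j _ => ?_
  have h : ∑ x, Matrix.diagonal d i x * M x j = d i * M i j := by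
    simp [Matrix.diagonal_apply]
  rw [h]; ring

lemma tr_quad_nonneg {n c : ℕ} (d : Fin n → ℝ) (hd : ∀ i, 0 ≤ d i)
    (M : Matrix (Fin n) (Fin c) ℝ) :
    0 ≤ Matrix.trace (Mᵀ * Matrix.diagonal d * M) := by
  rw [tr_quad_eq]
  refine Finset.sum_nonneg fun i _ => mul_nonneg (hd i) ?_
  exact Finset.sum_nonneg fun j _ => sq_nonneg _

lemma tr_quad_le {n c : ℕ} (d : Fin n → ℝ) (hd : ∀ i, 0 ≤ d i)
    (F B : Matrix (Fin n) (Fin c) ℝ)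
    (hF : ∀ i j, 0 ≤ F i j) (hFr : ∀ i, ∑ j, F i j = 1)
    (hB : ∀ i j, 0 ≤ B i j) (hBr : ∀ i, ∑ j, B i j = 1) :
    Matrix.trace ((F - B)ᵀ * Matrix.diagonal d * (F - B))
      ≤ 2 * Matrix.trace (Matrix.diagonal d) := by
  rw [tr_quad_eq, Matrix.trace_diagonal, Finset.mul_sum]
  refine Finset.sum_le_sum fun i _ => ?_
  rw [mul_comm (2:ℝ) (d i)]
  refine mul_le_mul_of_nonneg_left ?_ (hd i)
  have h2 : ∑ j, ((F - B) i j)^2 ≤ ∑ j, (F i j + B i j) := by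
    refine Finset.sum_le_sum fun j _ => ?_
    have hF1 : F i j ≤ 1 := by
      have := Finset.single_le_sum (f := fun j => F i j) (fun j _ => hF i j)
        (Finset.mem_univ j)
      linarith [hFr i]
    have hB1 : B i j ≤ 1 := by
      have := Finset.single_le_sum (f := fun j => B i j) (fun j _ => hB i j)
        (Finset.mem_univ j)
      linarith [hBr i]
    have := hF i j; have := hB i j
    simp only [Matrix.sub_apply]
    nlinarith [mul_nonneg (hF i j) (hB i j)]
  calc ∑ j, ((F - B) i j)^2 ≤ ∑ j, (F i j + B i j) := h2
    _ = 2 := by rw [Finset.sum_add_distrib, hFr i, hBr i]; norm_num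

/-- One alternate round of LERP decreases the objective up to the constant `2 tr(U_α)`:
with `J(F,B) = tr(Fᵀ L̃ F) + tr((F−F_init)ᵀ U (F−F_init)) + tr((F−B)ᵀ U_α (F−B))`,
if the classifier update does not increase the third term and the label-embedding
update does not increase the objective, then `J(F_{r+1}, B₃) ≤ J(F_r, B₁) + 2 tr(U_α)`. -/
theorem stmt_15 (n c : ℕ)
    (Atil : Matrix (Fin n) (Fin n) ℝ)
    (hL : ∀ x : Fin n → ℝ, 0 ≤ x ⬝ᵥ (1 - Atil).mulVec x)
    (u uα : Fin n → ℝ) (hu : ∀ i, 0 ≤ u i) (huα : ∀ i, 0 ≤ uα i)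
    (Finit : Matrix (Fin n) (Fin c) ℝ)
    (hFinit_nonneg : ∀ i j, 0 ≤ Finit i j) (hFinit_rows : ∀ i, ∑ j, Finit i j = 1)
    (J : Matrix (Fin n) (Fin c) ℝ → Matrix (Fin n) (Fin c) ℝ → ℝ)
    (hJ : ∀ F B, J F B =
      Matrix.trace (Fᵀ * (1 - Atil) * F)
        + Matrix.trace ((F - Finit)ᵀ * Matrix.diagonal u * (F - Finit))
        + Matrix.trace ((F - B)ᵀ * Matrix.diagonal uα * (F - B)))
    (Fr Fr1 B1 B2 B3 : Matrix (Fin n) (Fin c) ℝ)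
    (hFr_nonneg : ∀ i j, 0 ≤ Fr i j) (hFr_rows : ∀ i, ∑ j, Fr i j = 1)
    (hFr1_nonneg : ∀ i j, 0 ≤ Fr1 i j) (hFr1_rows : ∀ i, ∑ j, Fr1 i j = 1)
    (hB1_nonneg : ∀ i j, 0 ≤ B1 i j) (hB1_rows : ∀ i, ∑ j, B1 i j = 1)
    (hB2_nonneg : ∀ i j, 0 ≤ B2 i j) (hB2_rows : ∀ i, ∑ j, B2 i j = 1)
    (hB3_nonneg : ∀ i j, 0 ≤ B3 i j) (hB3_rows : ∀ i, ∑ j, B3 i j = 1)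
    (hi : Matrix.trace ((Fr - B2)ᵀ * Matrix.diagonal uα * (Fr - B2))
      ≤ Matrix.trace ((Fr - B1)ᵀ * Matrix.diagonal uα * (Fr - B1)))
    (hii : J Fr1 B2 ≤ J Fr B2) :
    J Fr1 B3 ≤ J Fr B1 + 2 * Matrix.trace (Matrix.diagonal uα) := by
  have hle3 := tr_quad_le uα huα Fr1 B3 hFr1_nonneg hFr1_rows hB3_nonneg hB3_rows
  have hnn2 := tr_quad_nonneg uα huα (Fr1 - B2)
  have h12 : J Fr B2 ≤ J Fr B1 := by
    rw [hJ, hJ]; linarith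
  have h3 : J Fr1 B3 ≤ J Fr1 B2 + 2 * Matrix.trace (Matrix.diagonal uα) := by
    rw [hJ, hJ]; linarith
  linarith
end
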